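/- arXiv:0907.3574 — 2 statements merged into one kernel-verified Lean document; each statement's English description precedes it below -/
import Mathlib

section
/- For the box nonlinearity η(u) = sign(u)·min(|u|,1) and X supported on [−1,1] with P(X ∉ {−1,+1}) ≤ ρδ, the derivative of the MSE map Ψ(σ²) = E[(η(X+(σ/√δ)Z) − X)²] with respect to σ², evaluated in the limit σ² ↓ 0, equals (1+ρδ)/(2δ). -/
/-! As `c = √δ/σ → ∞`, `Φ(c a) → (1 + sign a)/2`, so `Φ(c(1 - X)) - Φ(-c(1 + X))` tends to `1` where
`|X| < 1` and to `1/2` where `X = ±1`, because `Φ(0) = 1/2` by the symmetry of the Gaussian.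
The integrand takes values in `[-1, 1]`, so dominated convergence gives the limit
`(1 + P(|X| < 1))/2 = (1 + ρδ)/2` of its expectation. -/

open MeasureTheory Set Filter Topology

/-- Standard Gaussian density. -/
noncomputable def gaussPhi (z : ℝ) : ℝ := Real.exp (-z ^ 2 / 2) / Real.sqrt (2 * Real.pi)

/-- Standard Gaussian CDF. -/
noncomputable def gaussPhiCDF (z : ℝ) : ℝ := ∫ t in Set.Iic z, gaussPhi t

open ProbabilityTheory

lemma gaussPhi_eq_gaussianPDFReal : gaussPhi = gaussianPDFReal 0 1 := by
  ext z
  simp [gaussPhi, gaussianPDFReal, div_eq_inv_mul]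

lemma gaussPhiCDF_eq_cdf : gaussPhiCDF = cdf (gaussianReal 0 1) := by
  ext z
  rw [cdf_eq_real, measureReal_def, gaussianReal_apply_eq_integral _ one_ne_zero,
    ENNReal.toReal_ofReal (setIntegral_nonneg measurableSet_Iic fun t _ =>
      gaussianPDFReal_nonneg _ _ t), gaussPhiCDF, gaussPhi_eq_gaussianPDFReal]

lemma gaussPhiCDF_zero : gaussPhiCDF 0 = 1 / 2 := by
  set γ := gaussianReal 0 1
  have := nullSingletonClass_gaussianReal (μ := 0) (v := 1) one_ne_zero
  have hmap : γ.map Neg.neg = γ := by simpa using gaussianReal_map_neg (μ := 0) (v := 1)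
  have hsymm : γ.real (Iic 0) = γ.real (Ioi 0) := by
    simp only [measureReal_def]
    nth_rw 1 [← hmap]
    rw [Measure.map_apply measurable_neg measurableSet_Iic, Set.neg_preimage, Set.neg_Iic, neg_zero,
      measure_congr Ioi_ae_eq_Ici]
  have htotal : γ.real (Iic 0) + γ.real (Ioi 0) = 1 := by
    rw [← compl_Iic]; exact probReal_add_probReal_compl measurableSet_Iic
  rw [gaussPhiCDF_eq_cdf, cdf_eq_real]
  linarith

lemma tendsto_gaussPhiCDF_mul {α : Type*} {l : Filter α} {c : α → ℝ} (hc : Tendsto c l atTop)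
    (a : ℝ) : Tendsto (fun t => gaussPhiCDF (c t * a)) l (𝓝 ((1 + Real.sign a) / 2)) := by
  rcases lt_trichotomy a 0 with ha | rfl | ha
  · rw [Real.sign_of_neg ha, add_neg_cancel, zero_div, gaussPhiCDF_eq_cdf]
    exact (tendsto_cdf_atBot _).comp (hc.atTop_mul_const_of_neg ha)
  · simp only [mul_zero, Real.sign_zero, add_zero, gaussPhiCDF_zero]
    exact tendsto_const_nhds
  · rw [Real.sign_of_pos ha, add_self_div_two, gaussPhiCDF_eq_cdf]
    exact (tendsto_cdf_atTop _).comp (hc.atTop_mul_const ha)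

/-- `Φ(c(1-x)) - Φ(-c(1+x))`; with `c = √δ/σ` its mean over `X` is `δ · dΨ/dσ²`. -/
noncomputable def boxDerivIntegrand (c x : ℝ) : ℝ :=
  gaussPhiCDF (c * (1 - x)) - gaussPhiCDF (-c * (1 + x))

lemma measurable_gaussPhiCDF : Measurable gaussPhiCDF := by
  rw [gaussPhiCDF_eq_cdf]; exact (monotone_cdf _).measurable

lemma measurable_boxDerivIntegrand (c : ℝ) : Measurable (boxDerivIntegrand c) :=
  (measurable_gaussPhiCDF.comp ((measurable_const.sub measurable_id).const_mul _)).sub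
    (measurable_gaussPhiCDF.comp ((measurable_const.add measurable_id).const_mul _))

lemma abs_boxDerivIntegrand_le_one (c x : ℝ) : |boxDerivIntegrand c x| ≤ 1 := by
  rw [boxDerivIntegrand, gaussPhiCDF_eq_cdf]
  exact abs_sub_le_of_nonneg_of_le (cdf_nonneg _ _) (cdf_le_one _ _) (cdf_nonneg _ _)
    (cdf_le_one _ _)

lemma tendsto_boxDerivIntegrand {α : Type*} {l : Filter α} {c : α → ℝ} (hc : Tendsto c l atTop)
    (x : ℝ) : Tendsto (fun t => boxDerivIntegrand (c t) x) l
      (𝓝 ((Real.sign (1 - x) + Real.sign (1 + x)) / 2)) := by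
  have hlimit : (Real.sign (1 - x) + Real.sign (1 + x)) / 2
      = (1 + Real.sign (1 - x)) / 2 - (1 + Real.sign (-(1 + x))) / 2 := by
    rw [Real.sign_neg]; ring
  simp only [hlimit, boxDerivIntegrand, neg_mul_comm]
  exact (tendsto_gaussPhiCDF_mul hc (1 - x)).sub (tendsto_gaussPhiCDF_mul hc (-(1 + x)))

lemma sign_one_sub_add_sign_one_add_div_two {x : ℝ} (hx : x ∈ Icc (-1) 1) :
    (Real.sign (1 - x) + Real.sign (1 + x)) / 2 = if x ≠ 1 ∧ x ≠ -1 then 1 else 1 / 2 := by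
  obtain ⟨hlo, hhi⟩ := hx
  rcases hhi.lt_or_eq with hhi | rfl
  · rcases hlo.lt_or_eq with hlo | rfl
    · rw [Real.sign_of_pos (by linarith), Real.sign_of_pos (by linarith),
        if_pos ⟨hhi.ne, hlo.ne'⟩]
      norm_num
    · norm_num [Real.sign_of_pos]
  · norm_num [Real.sign_of_pos]

theorem tendsto_integral_boxDerivIntegrand {Ω : Type*} [MeasurableSpace Ω] (μ : Measure Ω)
    [IsProbabilityMeasure μ] {X : Ω → ℝ} (hX : Measurable X) (hsupp : ∀ ω, X ω ∈ Icc (-1) 1)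
    {α : Type*} {l : Filter α} [l.IsCountablyGenerated] {c : α → ℝ} (hc : Tendsto c l atTop) :
    Tendsto (fun t => ∫ ω, boxDerivIntegrand (c t) (X ω) ∂μ) l
      (𝓝 ((1 + μ.real {ω | X ω ≠ 1 ∧ X ω ≠ -1}) / 2)) := by
  set S := {ω | X ω ≠ 1 ∧ X ω ≠ -1}
  have hS : MeasurableSet S :=
    (hX (measurableSet_singleton 1)).compl.inter (hX (measurableSet_singleton (-1))).compl
  have hlimit : (fun ω => (Real.sign (1 - X ω) + Real.sign (1 + X ω)) / 2)
      = fun ω => S.indicator (fun _ => 1 / 2) ω + 1 / 2 := by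
    ext ω
    rw [sign_one_sub_add_sign_one_add_div_two (hsupp ω)]
    by_cases h : X ω ≠ 1 ∧ X ω ≠ -1
    · rw [if_pos h, Set.indicator_of_mem (s := S) h]; norm_num
    · rw [if_neg h, Set.indicator_of_notMem (s := S) h, zero_add]
  have hvalue : ∫ ω, (S.indicator (fun _ => 1 / 2) ω + 1 / 2) ∂μ = (1 + μ.real S) / 2 := by
    rw [integral_add ((integrable_const _).indicator hS) (integrable_const _),
      integral_indicator_const _ hS, integral_const, probReal_univ, smul_eq_mul, smul_eq_mul]
    ring
  rw [← hvalue, ← hlimit]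
  exact tendsto_integral_filter_of_dominated_convergence (fun _ => 1)
    (.of_forall fun t => ((measurable_boxDerivIntegrand _).comp hX).aestronglyMeasurable)
    (.of_forall fun t => .of_forall fun ω => abs_boxDerivIntegrand_le_one _ _)
    (integrable_const 1) (.of_forall fun ω => tendsto_boxDerivIntegrand hc (X ω))

theorem box_mse_map_deriv_limit
    {Ω : Type*} [MeasurableSpace Ω] (μ : Measure Ω) [IsProbabilityMeasure μ]
    (X : Ω → ℝ) (hX : Measurable X)
    (δ ρ : ℝ) (hδ : δ ∈ Set.Ioo (0:ℝ) 1) (hρ : ρ ∈ Set.Ioo (0:ℝ) 1)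
    (hsupp : ∀ ω, X ω ∈ Set.Icc (-1 : ℝ) 1)
    (hmass : μ {ω | X ω ≠ 1 ∧ X ω ≠ -1} = ENNReal.ofReal (ρ * δ)) :
    Filter.Tendsto
      (fun σ : ℝ => (1 / δ) *
        ∫ ω, (gaussPhiCDF ((Real.sqrt δ / σ) * (1 - X ω))
              - gaussPhiCDF (-(Real.sqrt δ / σ) * (1 + X ω))) ∂μ)
      (nhdsWithin 0 (Set.Ioi 0))
      (nhds ((1 + ρ * δ) / (2 * δ))) := by
  have hc : Tendsto (fun σ : ℝ => Real.sqrt δ / σ) (𝓝[>] 0) atTop :=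
    tendsto_inv_nhdsGT_zero.const_mul_atTop (Real.sqrt_pos.mpr hδ.1)
  have hlim := (tendsto_integral_boxDerivIntegrand μ hX hsupp hc).const_mul (1 / δ)
  rw [measureReal_def, hmass, ENNReal.toReal_ofReal (mul_nonneg hρ.1.le hδ.1.le)] at hlim
  rwa [show 1 / δ * ((1 + ρ * δ) / 2) = (1 + ρ * δ) / (2 * δ) by ring] at hlim
end

section
/- Let F_ε denote distributions F on ℝ with P_F(X ≠ 0) ≤ ε, and let M*(ε) = inf_λ sup_{F ∈ F_ε} E_F[(η(X+Z;λ) − X)²] with soft thresholding. Then for each δ ∈ (0,1), ρ < ρ_SE(δ) if and only if M*(δρ) < δ, where ρ_SE(δ) = sup{ρ : Ψ(σ²) < σ² for all σ² ∈ (0, E X²], for all F ∈ F_{ρδ}, for the optimal λ}. Consequently M*(ρδ) = δ exactly at ρ = ρ_SE(δ). -/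
/-!
Write `H(θ, x) = E (η(x + Z; θ) - x)²`. Averaging the integrand over `±Z` shows
`H(θ, x) ≤ 1 + θ²`, strictly when `θ > 0`, while `H(θ, x) → 1 + θ²` as `x → ∞`. Hence the
worst risk over `F_ε` is approached by two-point laws with a far-away atom and equals
`R(θ, ε) = (1 - ε) H(θ, 0) + ε (1 + θ²)` for `ε ≤ 1`, and `M*(ε) = inf_θ R(θ, ε)` is an infimum
of concave functions of `ε`, hence continuous.

By scale invariance `Ψ(s) = (s / δ) · risk(λ√δ, S F)` for a rescaled law `S F`, still in `F_ε`,
so state evolution is stable with threshold `λ` iff `R(λ√δ, ρδ) ≤ δ`: the strict bound on `H`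
gives `Ψ(s) < s`, and two-point laws with `E X² ≥ 1` show the converse at `s = 1`. Since
`R(θ, ·)` is strictly increasing below level `1`, `ρ < ρ_SE(δ)` iff some `θ` has `R(θ, ρδ) < δ`,
i.e. `M*(ρδ) < δ`; continuity of `M*` then gives `M*(ρ_SE(δ) δ) = δ`.
-/

open MeasureTheory ProbabilityTheory Set

noncomputable def softThresh (x θ : ℝ) : ℝ := Real.sign x * max (|x| - θ) 0

noncomputable def stdGauss : Measure ℝ := gaussianReal 0 1

/-- The class `F_ε` of probability laws on `ℝ` with mass at most `ε` away from `0`. -/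
def sparseClass (ε : ℝ) : Set (Measure ℝ) :=
  {F | IsProbabilityMeasure F ∧ F ({0}ᶜ) ≤ ENNReal.ofReal ε}

/-- Soft-thresholding risk at noise level one: `E_F[(η(X+Z;λ) − X)²]`. -/
noncomputable def risk (lam : ℝ) (F : Measure ℝ) : ℝ :=
  ∫ x, ∫ z, (softThresh (x + z) lam - x) ^ 2 ∂stdGauss ∂F

/-- Minimax soft-thresholding risk `M*(ε)`. -/
noncomputable def Mstar (ε : ℝ) : ℝ :=
  sInf {m | ∃ lam : ℝ, 0 ≤ lam ∧ m = sSup {r | ∃ F ∈ sparseClass ε, r = risk lam F}}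

/-- The MSE map `Ψ(σ²; δ, λ, F)`. -/
noncomputable def mseMap (s δ lam : ℝ) (F : Measure ℝ) : ℝ :=
  ∫ x, ∫ z, (softThresh (x + (Real.sqrt s / Real.sqrt δ) * z) (lam * Real.sqrt s) - x) ^ 2
    ∂stdGauss ∂F

/-- The state-evolution threshold `ρ_SE(δ)` (with optimally tuned `λ`). -/
noncomputable def rhoSE (δ : ℝ) : ℝ :=
  sSup {ρ : ℝ | 0 < ρ ∧ ∃ lam : ℝ, 0 ≤ lam ∧
    ∀ F ∈ sparseClass (ρ * δ), ∀ s ∈ Set.Ioc (0 : ℝ) (∫ x, x ^ 2 ∂F),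
      mseMap s δ lam F < s}

open Real Filter
open scoped Topology

noncomputable def clip (θ u : ℝ) : ℝ := max (-θ) (min θ u)

lemma abs_clip_le {θ : ℝ} (hθ : 0 ≤ θ) (u : ℝ) : |clip θ u| ≤ θ :=
  abs_le.mpr ⟨le_max_left _ _, max_le (by linarith) (min_le_left _ _)⟩

lemma monotone_clip (θ : ℝ) : Monotone (clip θ) :=
  fun _ _ h => max_le_max le_rfl (min_le_min le_rfl h)

lemma clip_zero {θ : ℝ} (hθ : 0 ≤ θ) : clip θ 0 = 0 := by
  simp [clip, hθ]

lemma softThresh_eq_sub_clip {θ : ℝ} (hθ : 0 ≤ θ) (u : ℝ) : softThresh u θ = u - clip θ u := by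
  unfold softThresh clip
  rcases lt_trichotomy u 0 with hu | rfl | hu
  · rw [Real.sign_of_neg hu, abs_of_neg hu, min_eq_right (by linarith)]
    rcases le_or_gt (-θ) u with h | h
    · rw [max_eq_right h, max_eq_right (by linarith)]; ring
    · rw [max_eq_left h.le, max_eq_left (by linarith)]; ring
  · simp [hθ]
  · rw [Real.sign_of_pos hu, abs_of_pos hu]
    rcases le_or_gt u θ with h | h
    · rw [min_eq_right h, max_eq_right (by linarith), max_eq_right (by linarith)]; ring
    · rw [min_eq_left h.le, max_eq_left (by linarith), max_eq_right (by linarith)]; ring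

lemma continuous_softThresh {θ : ℝ} (hθ : 0 ≤ θ) : Continuous fun u => softThresh u θ := by
  simp_rw [softThresh_eq_sub_clip hθ, clip]
  fun_prop

lemma softThresh_zero_right (u : ℝ) : softThresh u 0 = u := by
  rw [softThresh_eq_sub_clip le_rfl]
  simp [clip]

lemma softThresh_of_abs_le {u θ : ℝ} (h : |u| ≤ θ) : softThresh u θ = 0 := by
  simp [softThresh, h]

lemma softThresh_of_le {u θ : ℝ} (hθ : 0 ≤ θ) (h : θ ≤ u) : softThresh u θ = u - θ := by
  simp [softThresh_eq_sub_clip hθ, clip, h, show -θ ≤ θ by linarith]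

lemma softThresh_mul_mul {θ c : ℝ} (hθ : 0 ≤ θ) (hc : 0 < c) (u : ℝ) :
    softThresh (c * u) (c * θ) = c * softThresh u θ := by
  rw [softThresh_eq_sub_clip (by positivity), softThresh_eq_sub_clip hθ, clip, clip, mul_sub,
    ← mul_min_of_nonneg _ _ hc.le, ← mul_neg, ← mul_max_of_nonneg _ _ hc.le]

lemma sq_softThresh_le {θ : ℝ} (hθ : 0 ≤ θ) (u : ℝ) : softThresh u θ ^ 2 ≤ u ^ 2 := by
  have hsign : Real.sign u ^ 2 ≤ 1 := by rcases Real.sign_apply_eq u with h | h | h <;> simp [h]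
  have hm : max (|u| - θ) 0 ^ 2 ≤ u ^ 2 := by
    rw [← sq_abs u]
    exact pow_le_pow_left₀ (le_max_right _ _) (max_le (by linarith) (abs_nonneg u)) 2
  rw [softThresh, mul_pow]
  nlinarith [sq_nonneg (max (|u| - θ) 0)]

lemma sq_softThresh_add_sub_le {θ : ℝ} (hθ : 0 ≤ θ) (x z : ℝ) :
    (softThresh (x + z) θ - x) ^ 2 ≤ 2 * z ^ 2 + 2 * θ ^ 2 := by
  have hc := abs_le.mp (abs_clip_le hθ (x + z))
  rw [softThresh_eq_sub_clip hθ]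
  nlinarith [sq_le_sq' hc.1 hc.2, sq_nonneg (z + clip θ (x + z))]

lemma softThresh_symm_le {θ : ℝ} (hθ : 0 ≤ θ) (x z : ℝ) :
    (softThresh (x + z) θ - x) ^ 2 + (softThresh (x - z) θ - x) ^ 2 ≤ 2 * (z ^ 2 + θ ^ 2) := by
  set a := clip θ (x + z)
  set b := clip θ (x - z)
  have hab : 0 ≤ z * (a - b) := by
    rcases le_total 0 z with hz | hz
    · exact mul_nonneg hz (sub_nonneg.mpr (monotone_clip θ (by linarith)))
    · exact mul_nonneg_of_nonpos_of_nonpos hz (sub_nonpos.mpr (monotone_clip θ (by linarith)))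
  have ha := abs_le.mp (abs_clip_le hθ (x + z))
  have hb := abs_le.mp (abs_clip_le hθ (x - z))
  rw [softThresh_eq_sub_clip hθ, softThresh_eq_sub_clip hθ]
  nlinarith [sq_le_sq' ha.1 ha.2, sq_le_sq' hb.1 hb.2]

lemma softThresh_symm_lt {θ : ℝ} (hθ : 0 < θ) (x : ℝ) :
    (softThresh (x + -x) θ - x) ^ 2 + (softThresh (x - -x) θ - x) ^ 2 < 2 * ((-x) ^ 2 + θ ^ 2) := by
  set c := clip θ (x - -x)
  have hxc : 0 ≤ x * c := by
    rcases le_total 0 x with hx | hx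
    · exact mul_nonneg hx (clip_zero hθ.le ▸ monotone_clip θ (by linarith))
    · exact mul_nonneg_of_nonpos_of_nonpos hx (clip_zero hθ.le ▸ monotone_clip θ (by linarith))
  have hc := abs_le.mp (abs_clip_le hθ.le (x - -x))
  rw [softThresh_eq_sub_clip hθ.le, softThresh_eq_sub_clip hθ.le, add_neg_cancel, clip_zero hθ.le]
  nlinarith [sq_le_sq' hc.1 hc.2]

instance : IsProbabilityMeasure stdGauss := by unfold stdGauss; infer_instance

instance : stdGauss.IsOpenPosMeasure :=
  (gaussianReal_absolutelyContinuous' 0 one_ne_zero).isOpenPosMeasure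

lemma integrable_sq_stdGauss : Integrable (fun z : ℝ => z ^ 2) stdGauss :=
  (memLp_id_gaussianReal 2).integrable_sq

lemma integral_sq_stdGauss : ∫ z, z ^ 2 ∂stdGauss = 1 := by
  have h := variance_fun_id_gaussianReal (μ := 0) (v := 1)
  rw [variance_eq_integral aemeasurable_id', integral_id_gaussianReal] at h
  simpa [stdGauss] using h

lemma integral_sub_sq_stdGauss (θ : ℝ) : ∫ z, (z - θ) ^ 2 ∂stdGauss = 1 + θ ^ 2 := by
  have hid : Integrable (fun z : ℝ => z) stdGauss := memLp_id_gaussianReal 1 |>.integrable le_rfl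
  simp_rw [sub_sq]
  rw [integral_add (integrable_sq_stdGauss.sub' ((hid.const_mul 2).mul_const θ))
      (integrable_const _),
    integral_sub integrable_sq_stdGauss ((hid.const_mul 2).mul_const θ), integral_mul_const,
    integral_const_mul, integral_sq_stdGauss, stdGauss, integral_id_gaussianReal]
  simp

instance : stdGauss.IsNegInvariant :=
  ⟨by rw [Measure.neg_def, stdGauss, gaussianReal_map_neg, neg_zero]⟩

lemma integrable_stdGauss_of_sq_bound {g : ℝ → ℝ} (hg : AEStronglyMeasurable g stdGauss) (a b : ℝ)
    (hb : ∀ z, |g z| ≤ a * z ^ 2 + b) : Integrable g stdGauss :=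
  ((integrable_sq_stdGauss.const_mul a).add (integrable_const b)).mono' hg (ae_of_all _ hb)

noncomputable def pointRisk (θ x : ℝ) : ℝ := ∫ z, (softThresh (x + z) θ - x) ^ 2 ∂stdGauss

lemma risk_eq_integral_pointRisk (θ : ℝ) (F : Measure ℝ) :
    risk θ F = ∫ x, pointRisk θ x ∂F := rfl

lemma pointRisk_nonneg (θ x : ℝ) : 0 ≤ pointRisk θ x := integral_nonneg fun _ => sq_nonneg _

lemma integrable_pointRisk_integrand {θ : ℝ} (hθ : 0 ≤ θ) (x : ℝ) :
    Integrable (fun z => (softThresh (x + z) θ - x) ^ 2) stdGauss := by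
  have := continuous_softThresh hθ
  exact integrable_stdGauss_of_sq_bound (by fun_prop) 2 (2 * θ ^ 2)
    fun z => by rw [abs_of_nonneg (sq_nonneg _)]; exact sq_softThresh_add_sub_le hθ x z

lemma integrable_pointRisk_integrand_neg {θ : ℝ} (hθ : 0 ≤ θ) (x : ℝ) :
    Integrable (fun z => (softThresh (x - z) θ - x) ^ 2) stdGauss := by
  simpa [sub_eq_add_neg] using (integrable_pointRisk_integrand hθ x).comp_neg

lemma continuous_pointRisk {θ : ℝ} (hθ : 0 ≤ θ) : Continuous (pointRisk θ) := by
  have := continuous_softThresh hθ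
  refine continuous_of_dominated (bound := fun z => 2 * z ^ 2 + 2 * θ ^ 2)
    (fun x => (integrable_pointRisk_integrand hθ x).aestronglyMeasurable)
    (fun x => ae_of_all _ fun z => ?_)
    ((integrable_sq_stdGauss.const_mul 2).add (integrable_const _))
    (ae_of_all _ fun z => by fun_prop)
  rw [Real.norm_eq_abs, abs_of_nonneg (sq_nonneg _)]
  exact sq_softThresh_add_sub_le hθ x z

lemma pointRisk_zero_left (x : ℝ) : pointRisk 0 x = 1 := by
  simp [pointRisk, softThresh_zero_right, integral_sq_stdGauss]

lemma pointRisk_zero_right_le_one {θ : ℝ} (hθ : 0 ≤ θ) : pointRisk θ 0 ≤ 1 := by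
  rw [← integral_sq_stdGauss]
  refine integral_mono (integrable_pointRisk_integrand hθ 0) integrable_sq_stdGauss fun z => ?_
  simpa using sq_softThresh_le hθ z

/-- Symmetrising in `z ↦ -z` makes the gap to `1 + θ²` an integral of a nonnegative function. -/
lemma one_add_sq_sub_pointRisk {θ : ℝ} (hθ : 0 ≤ θ) (x : ℝ) :
    1 + θ ^ 2 - pointRisk θ x = ∫ z, (z ^ 2 + θ ^ 2
      - ((softThresh (x + z) θ - x) ^ 2 + (softThresh (x - z) θ - x) ^ 2) / 2) ∂stdGauss := by
  have hint := integrable_pointRisk_integrand hθ x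
  have hint' := integrable_pointRisk_integrand_neg hθ x
  have hneg : ∫ z, (softThresh (x - z) θ - x) ^ 2 ∂stdGauss = pointRisk θ x := by
    have := integral_neg_eq_self (fun z => (softThresh (x + z) θ - x) ^ 2) stdGauss
    simp only [← sub_eq_add_neg] at this
    exact this
  have hsq : Integrable (fun z : ℝ => z ^ 2 + θ ^ 2) stdGauss :=
    integrable_sq_stdGauss.add (integrable_const _)
  have hsum : Integrable (fun z => ((softThresh (x + z) θ - x) ^ 2
      + (softThresh (x - z) θ - x) ^ 2) / 2) stdGauss := (hint.add hint').div_const 2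
  rw [integral_sub hsq hsum, integral_div, integral_add hint hint', hneg,
    integral_add integrable_sq_stdGauss (integrable_const _), integral_sq_stdGauss]
  simp [pointRisk]

lemma pointRisk_le {θ : ℝ} (hθ : 0 ≤ θ) (x : ℝ) : pointRisk θ x ≤ 1 + θ ^ 2 := by
  have hgap : 0 ≤ 1 + θ ^ 2 - pointRisk θ x := one_add_sq_sub_pointRisk hθ x ▸
    integral_nonneg fun z => by simp only [Pi.zero_apply]; linarith [softThresh_symm_le hθ x z]
  linarith

lemma pointRisk_lt {θ : ℝ} (hθ : 0 < θ) (x : ℝ) : pointRisk θ x < 1 + θ ^ 2 := by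
  have := continuous_softThresh hθ.le
  have hgap : 0 < 1 + θ ^ 2 - pointRisk θ x := one_add_sq_sub_pointRisk hθ.le x ▸
    integral_pos_of_integrable_nonneg_nonzero (x := -x) (by fun_prop)
      ((integrable_sq_stdGauss.add (integrable_const _)).sub
        (((integrable_pointRisk_integrand hθ.le x).add
          (integrable_pointRisk_integrand_neg hθ.le x)).div_const 2))
      (fun z => by simp only [Pi.zero_apply]; linarith [softThresh_symm_le hθ.le x z])
      (by linarith [softThresh_symm_lt hθ x])
  linarith

lemma tendsto_pointRisk_atTop {θ : ℝ} (hθ : 0 ≤ θ) :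
    Tendsto (pointRisk θ) atTop (𝓝 (1 + θ ^ 2)) := by
  rw [← integral_sub_sq_stdGauss θ]
  refine tendsto_integral_filter_of_dominated_convergence (fun z => 2 * z ^ 2 + 2 * θ ^ 2)
    (.of_forall fun x => (integrable_pointRisk_integrand hθ x).aestronglyMeasurable)
    (.of_forall fun x => ae_of_all _ fun z => ?_)
    ((integrable_sq_stdGauss.const_mul 2).add (integrable_const _)) (ae_of_all _ fun z => ?_)
  · rw [Real.norm_eq_abs, abs_of_nonneg (sq_nonneg _)]
    exact sq_softThresh_add_sub_le hθ x z
  · refine tendsto_const_nhds.congr' ?_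
    filter_upwards [eventually_ge_atTop (θ - z)] with x hx
    rw [softThresh_of_le hθ (by linarith)]
    ring

lemma tendsto_pointRisk_zero_right : Tendsto (fun θ => pointRisk θ 0) atTop (𝓝 0) := by
  have key : Tendsto (fun θ => pointRisk θ 0) atTop (𝓝 (∫ _, (0 : ℝ) ∂stdGauss)) := by
    refine tendsto_integral_filter_of_dominated_convergence (fun z => z ^ 2)
      ?_ ?_ integrable_sq_stdGauss (ae_of_all _ fun z => ?_)
    · filter_upwards [eventually_ge_atTop 0] with θ hθ
      exact (integrable_pointRisk_integrand hθ 0).aestronglyMeasurable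
    · filter_upwards [eventually_ge_atTop 0] with θ hθ
      refine ae_of_all _ fun z => ?_
      rw [Real.norm_eq_abs, abs_of_nonneg (sq_nonneg _)]
      simpa using sq_softThresh_le hθ z
    · refine tendsto_const_nhds.congr' ?_
      filter_upwards [eventually_ge_atTop |z|] with θ hθ
      simp [softThresh_of_abs_le hθ]
  simpa using key

lemma setIntegral_lt_mul_measureReal {α : Type*} [MeasurableSpace α] {μ : Measure α}
    [IsFiniteMeasure μ] {s : Set α} {f : α → ℝ} {C : ℝ} (hs : MeasurableSet s) (hμs : μ s ≠ 0)
    (hf : IntegrableOn f s μ) (hlt : ∀ x ∈ s, f x < C) :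
    ∫ x in s, f x ∂μ < C * μ.real s := by
  have hC : IntegrableOn (fun _ => C) s μ := integrableOn_const (measure_ne_top μ s)
  have hgap : 0 < ∫ x in s, (C - f x) ∂μ := by
    rw [setIntegral_pos_iff_support_of_nonneg_ae
      ((ae_restrict_iff' hs).mpr (ae_of_all _ fun x hx => (sub_pos.mpr (hlt x hx)).le)) (hC.sub hf),
      inter_eq_right.mpr fun x hx => Function.mem_support.mpr (sub_pos.mpr (hlt x hx)).ne']
    exact pos_iff_ne_zero.mpr hμs
  rw [integral_sub hC hf, setIntegral_const, smul_eq_mul] at hgap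
  linarith

noncomputable def worstRisk (θ ε : ℝ) : ℝ :=
  (1 - min ε 1) * pointRisk θ 0 + min ε 1 * (1 + θ ^ 2)

lemma measureReal_compl_zero_le {ε : ℝ} (hε : 0 ≤ ε) {F : Measure ℝ} (hF : F ∈ sparseClass ε) :
    F.real {0}ᶜ ≤ min ε 1 :=
  haveI := hF.1
  le_min (ENNReal.toReal_le_of_le_ofReal hε hF.2) measureReal_le_one

lemma mixture_le_worstRisk {θ ε m : ℝ} (hθ : 0 ≤ θ) (hm : m ≤ min ε 1) :
    (1 - m) * pointRisk θ 0 + m * (1 + θ ^ 2) ≤ worstRisk θ ε := by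
  unfold worstRisk
  nlinarith [pointRisk_zero_right_le_one hθ, sq_nonneg θ]

lemma integrable_pointRisk {θ : ℝ} (hθ : 0 ≤ θ) (F : Measure ℝ) [IsFiniteMeasure F] :
    Integrable (pointRisk θ) F :=
  (integrable_const (1 + θ ^ 2)).mono' (continuous_pointRisk hθ).aestronglyMeasurable
    (ae_of_all _ fun x => by
      rw [Real.norm_eq_abs, abs_of_nonneg (pointRisk_nonneg θ x)]; exact pointRisk_le hθ x)

lemma risk_eq_add_setIntegral {θ : ℝ} (hθ : 0 ≤ θ) (F : Measure ℝ) [IsProbabilityMeasure F] :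
    risk θ F = (1 - F.real {0}ᶜ) * pointRisk θ 0 + ∫ x in {0}ᶜ, pointRisk θ x ∂F := by
  rw [risk_eq_integral_pointRisk, ← integral_add_compl (measurableSet_singleton 0)
    (integrable_pointRisk hθ F), integral_singleton, probReal_compl_eq_one_sub
    (measurableSet_singleton 0), smul_eq_mul, sub_sub_cancel]

lemma risk_le_worstRisk {θ ε : ℝ} (hθ : 0 ≤ θ) (hε : 0 ≤ ε) {F : Measure ℝ}
    (hF : F ∈ sparseClass ε) : risk θ F ≤ worstRisk θ ε := by
  have := hF.1
  have hset : ∫ x in {0}ᶜ, pointRisk θ x ∂F ≤ (1 + θ ^ 2) * F.real {0}ᶜ :=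
    (le_abs_self _).trans (norm_setIntegral_le_of_norm_le_const (measure_lt_top F _) fun x _ => by
      rw [Real.norm_eq_abs, abs_of_nonneg (pointRisk_nonneg θ x)]; exact pointRisk_le hθ x)
  rw [risk_eq_add_setIntegral hθ]
  linarith [mixture_le_worstRisk hθ (measureReal_compl_zero_le hε hF)]

lemma risk_lt_worstRisk {θ ε : ℝ} (hθ : 0 < θ) (hε : 0 ≤ ε) {F : Measure ℝ}
    (hF : F ∈ sparseClass ε) (hF0 : F {0}ᶜ ≠ 0) : risk θ F < worstRisk θ ε := by
  have := hF.1
  have hset : ∫ x in {0}ᶜ, pointRisk θ x ∂F < (1 + θ ^ 2) * F.real {0}ᶜ :=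
    setIntegral_lt_mul_measureReal (measurableSet_singleton 0).compl hF0
      (integrable_pointRisk hθ.le F).integrableOn fun x _ => pointRisk_lt hθ x
  rw [risk_eq_add_setIntegral hθ.le]
  linarith [mixture_le_worstRisk hθ.le (measureReal_compl_zero_le hε hF)]

noncomputable def twoPoint (w a : ℝ) : Measure ℝ :=
  ENNReal.ofReal (1 - w) • Measure.dirac 0 + ENNReal.ofReal w • Measure.dirac a

lemma integral_twoPoint {w : ℝ} (hw0 : 0 ≤ w) (hw1 : w ≤ 1) (a : ℝ) (f : ℝ → ℝ) :
    ∫ x, f x ∂twoPoint w a = (1 - w) * f 0 + w * f a := by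
  rw [twoPoint, integral_add_measure
    ((integrable_dirac enorm_lt_top).smul_measure ENNReal.ofReal_ne_top)
    ((integrable_dirac enorm_lt_top).smul_measure ENNReal.ofReal_ne_top),
    integral_smul_measure, integral_smul_measure, integral_dirac, integral_dirac,
    ENNReal.toReal_ofReal (by linarith), ENNReal.toReal_ofReal hw0, smul_eq_mul, smul_eq_mul]

lemma twoPoint_mem_sparseClass {w ε : ℝ} (hw0 : 0 ≤ w) (hw1 : w ≤ 1) (hwε : w ≤ ε) (a : ℝ) :
    twoPoint w a ∈ sparseClass ε := by
  refine ⟨⟨?_⟩, ?_⟩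
  · simp [twoPoint, ← ENNReal.ofReal_add (by linarith : 0 ≤ 1 - w) hw0]
  · simp only [twoPoint, Measure.add_apply, Measure.smul_apply, smul_eq_mul,
      Measure.dirac_apply' _ (measurableSet_singleton (0 : ℝ)).compl]
    by_cases ha : a = 0 <;> simp [ha, ENNReal.ofReal_le_ofReal hwε]

lemma map_twoPoint_mul (w a k : ℝ) : (twoPoint w a).map (· * k) = twoPoint w (a * k) := by
  simp [twoPoint, Measure.map_add _ _ (measurable_mul_const k), Measure.map_smul,
    Measure.map_dirac' (measurable_mul_const k)]

lemma tendsto_risk_twoPoint {θ ε : ℝ} (hθ : 0 ≤ θ) (hε : 0 ≤ ε) :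
    Tendsto (fun a => risk θ (twoPoint (min ε 1) a)) atTop (𝓝 (worstRisk θ ε)) := by
  simp_rw [risk_eq_integral_pointRisk, integral_twoPoint (le_min hε zero_le_one) (min_le_right _ _)]
  exact ((tendsto_pointRisk_atTop hθ).const_mul _).const_add _

lemma sSup_risk_eq_worstRisk {θ ε : ℝ} (hθ : 0 ≤ θ) (hε : 0 ≤ ε) :
    sSup {r | ∃ F ∈ sparseClass ε, r = risk θ F} = worstRisk θ ε := by
  have hmem : ∀ a, twoPoint (min ε 1) a ∈ sparseClass ε :=
    twoPoint_mem_sparseClass (le_min hε zero_le_one) (min_le_right _ _) (min_le_left _ _)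
  refine csSup_eq_of_forall_le_of_forall_lt_exists_gt ⟨_, _, hmem 0, rfl⟩ ?_ fun r hr => ?_
  · rintro r ⟨F, hF, rfl⟩
    exact risk_le_worstRisk hθ hε hF
  · obtain ⟨a, ha⟩ := ((tendsto_risk_twoPoint hθ hε).eventually (eventually_gt_nhds hr)).exists
    exact ⟨_, ⟨_, hmem a, rfl⟩, ha⟩

lemma Mstar_eq_iInf {ε : ℝ} (hε : 0 ≤ ε) : Mstar ε = ⨅ θ : Ici (0 : ℝ), worstRisk θ ε := by
  unfold Mstar iInf
  congr 1
  ext m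
  constructor
  · rintro ⟨θ, hθ, rfl⟩
    exact ⟨⟨θ, hθ⟩, (sSup_risk_eq_worstRisk hθ hε).symm⟩
  · rintro ⟨⟨θ, hθ⟩, rfl⟩
    exact ⟨θ, hθ, (sSup_risk_eq_worstRisk hθ hε).symm⟩

lemma worstRisk_nonneg {θ ε : ℝ} (hε : 0 ≤ ε) : 0 ≤ worstRisk θ ε :=
  add_nonneg (mul_nonneg (sub_nonneg.mpr (min_le_right ε 1)) (pointRisk_nonneg θ 0))
    (mul_nonneg (le_min hε zero_le_one) (by positivity))

lemma Mstar_lt_iff {ε d : ℝ} (hε : 0 ≤ ε) :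
    Mstar ε < d ↔ ∃ θ, 0 ≤ θ ∧ worstRisk θ ε < d := by
  rw [Mstar_eq_iInf hε, ciInf_lt_iff ⟨0, forall_mem_range.mpr fun _ => worstRisk_nonneg hε⟩]
  simp

lemma ConcaveOn.ciInf {E ι : Type*} [AddCommMonoid E] [Module ℝ E] [Nonempty ι] {s : Set E}
    {f : ι → E → ℝ} (hf : ∀ i, ConcaveOn ℝ s (f i))
    (hbdd : ∀ x ∈ s, BddBelow (range fun i => f i x)) :
    ConcaveOn ℝ s fun x => ⨅ i, f i x := by
  refine ⟨(hf (Classical.arbitrary ι)).1, fun x hx y hy a b ha hb hab => le_ciInf fun i => ?_⟩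
  calc a • (⨅ i, f i x) + b • ⨅ i, f i y ≤ a • f i x + b • f i y := by
        gcongr
        exacts [ciInf_le (hbdd x hx) i, ciInf_le (hbdd y hy) i]
    _ ≤ f i (a • x + b • y) := (hf i).2 hx hy ha hb hab

lemma concaveOn_worstRisk {θ : ℝ} (hθ : 0 ≤ θ) : ConcaveOn ℝ univ (worstRisk θ) := by
  have hmin : ConcaveOn ℝ univ fun ε : ℝ => min ε 1 :=
    (concaveOn_id convex_univ).inf (concaveOn_const 1 convex_univ)
  have hslope : 0 ≤ 1 + θ ^ 2 - pointRisk θ 0 := by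
    nlinarith [pointRisk_zero_right_le_one hθ, sq_nonneg θ]
  refine ((hmin.smul hslope).add_const (pointRisk θ 0)).congr fun ε _ => ?_
  simp only [worstRisk, smul_eq_mul, Pi.add_apply]
  ring

lemma concaveOn_Mstar : ConcaveOn ℝ (Ici 0) Mstar :=
  (ConcaveOn.ciInf (fun θ : Ici (0 : ℝ) => (concaveOn_worstRisk θ.2).subset (subset_univ _)
      (convex_Ici 0))
    fun _ hε => ⟨0, forall_mem_range.mpr fun _ => worstRisk_nonneg hε⟩).congr
    fun _ hε => (Mstar_eq_iInf hε).symm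

lemma continuousOn_Mstar : ContinuousOn Mstar (Ioi 0) := by
  simpa using concaveOn_Mstar.continuousOn_interior

lemma worstRisk_zero_left (ε : ℝ) : worstRisk 0 ε = 1 := by
  simp [worstRisk, pointRisk_zero_left]

lemma continuous_worstRisk (θ : ℝ) : Continuous (worstRisk θ) := by
  unfold worstRisk
  fun_prop

lemma lt_one_of_worstRisk_lt_one {θ ε : ℝ} (h : worstRisk θ ε < 1) : ε < 1 := by
  by_contra! hε
  simp only [worstRisk, min_eq_right hε] at h
  nlinarith [sq_nonneg θ]

lemma worstRisk_lt_worstRisk {θ ε ε' : ℝ} (hθ : 0 ≤ θ) (h : ε < ε') (h' : worstRisk θ ε' < 1) :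
    worstRisk θ ε < worstRisk θ ε' := by
  have hε' := lt_one_of_worstRisk_lt_one h'
  have hθ0 : θ ≠ 0 := by
    rintro rfl
    simp [worstRisk_zero_left] at h'
  unfold worstRisk at *
  rw [min_eq_left (h.trans hε').le, min_eq_left hε'.le]
  nlinarith [pointRisk_zero_right_le_one hθ, pow_pos (hθ.lt_of_ne' hθ0) 2]

lemma exists_worstRisk_lt {d : ℝ} (hd : 0 < d) : ∃ θ ε, 0 ≤ θ ∧ 0 < ε ∧ worstRisk θ ε < d := by
  obtain ⟨θ, hθd, hθ⟩ :=
    ((tendsto_pointRisk_zero_right.eventually (eventually_lt_nhds hd)).and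
      (eventually_ge_atTop 0)).exists
  have h0 : worstRisk θ 0 < d := by simpa [worstRisk] using hθd
  obtain ⟨ε, hε, hεpos⟩ := ((((continuous_worstRisk θ).continuousWithinAt (s := Ioi 0)).eventually
    (eventually_lt_nhds h0)).and self_mem_nhdsWithin).exists
  exact ⟨θ, ε, hθ, hεpos, hε⟩

lemma map_mul_apply_compl_zero {k : ℝ} (hk : k ≠ 0) (F : Measure ℝ) :
    F.map (· * k) {0}ᶜ = F {0}ᶜ := by
  rw [Measure.map_apply (measurable_mul_const k) (measurableSet_singleton 0).compl]
  congr 1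
  ext x
  simp [hk]

lemma sparseClass_map_mul {ε k : ℝ} (hk : k ≠ 0) {F : Measure ℝ} (hF : F ∈ sparseClass ε) :
    F.map (· * k) ∈ sparseClass ε :=
  have := hF.1
  ⟨Measure.isProbabilityMeasure_map (measurable_mul_const k).aemeasurable,
    map_mul_apply_compl_zero hk F ▸ hF.2⟩

lemma mseMap_eq_mul_risk_map {s δ lam : ℝ} (hs : 0 < s) (hδ : 0 < δ) (hlam : 0 ≤ lam)
    (F : Measure ℝ) : mseMap s δ lam F = s / δ * risk (lam * √δ) (F.map (· * (√δ / √s))) := by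
  have hθ : 0 ≤ lam * √δ := by positivity
  have hpt : ∀ x z, (softThresh (x + √s / √δ * z) (lam * √s) - x) ^ 2
      = s / δ * (softThresh (x * (√δ / √s) + z) (lam * √δ) - x * (√δ / √s)) ^ 2 := by
    intro x z
    have h1 : x + √s / √δ * z = √s / √δ * (x * (√δ / √s) + z) := by field_simp
    have h2 : lam * √s = √s / √δ * (lam * √δ) := by field_simp
    have h3 : s / δ = (√s / √δ) ^ 2 := by rw [div_pow, sq_sqrt hs.le, sq_sqrt hδ.le]
    rw [h1, h2, softThresh_mul_mul hθ (by positivity), h3]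
    field_simp
  rw [risk_eq_integral_pointRisk, integral_map (measurable_mul_const _).aemeasurable
    (continuous_pointRisk hθ).aestronglyMeasurable, ← integral_const_mul]
  refine integral_congr_ae (ae_of_all _ fun x => ?_)
  simp only [pointRisk, ← integral_const_mul, ← hpt]

lemma mseMap_lt_self {δ θ ε s : ℝ} (hδ : 0 < δ) (hθ : 0 < θ) (hε : 0 ≤ ε)
    (hR : worstRisk θ ε ≤ δ) {F : Measure ℝ} (hF : F ∈ sparseClass ε)
    (hs : s ∈ Ioc 0 (∫ x, x ^ 2 ∂F)) : mseMap s δ (θ / √δ) F < s := by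
  have hδ' : 0 < √δ := sqrt_pos.mpr hδ
  have hk : √δ / √s ≠ 0 := (div_pos hδ' (sqrt_pos.mpr hs.1)).ne'
  have hF0 : F {0}ᶜ ≠ 0 := by
    intro h0
    have hmoment : ∫ x, x ^ 2 ∂F = 0 := integral_eq_zero_of_ae <| (ae_iff.mpr h0).mono
      fun x (hx : x = 0) => by simp [hx]
    linarith [hs.1, hs.2, hmoment]
  have hrisk := risk_lt_worstRisk hθ hε (sparseClass_map_mul hk hF)
    ((map_mul_apply_compl_zero hk F).trans_ne hF0)
  rw [mseMap_eq_mul_risk_map hs.1 hδ (by positivity), div_mul_cancel₀ θ hδ'.ne']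
  calc s / δ * risk θ (F.map (· * (√δ / √s))) < s / δ * δ := by
        gcongr
        · exact div_pos hs.1 hδ
        · exact hrisk.trans_le hR
    _ = s := div_mul_cancel₀ s hδ.ne'

/-- Two-point laws with a far-away atom bring the risk close to its supremum while their second
moment grows, so stability at `s = 1` forces the worst-case risk down to `δ`. -/
lemma worstRisk_le_of_mseMap_lt {δ lam ε : ℝ} (hδ : 0 < δ) (hε : 0 < ε) (hlam : 0 ≤ lam)
    (hSE : ∀ F ∈ sparseClass ε, ∀ s ∈ Ioc (0 : ℝ) (∫ x, x ^ 2 ∂F), mseMap s δ lam F < s) :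
    worstRisk (lam * √δ) ε ≤ δ := by
  have hδ' : 0 < √δ := sqrt_pos.mpr hδ
  have hw : 0 < min ε 1 := lt_min hε one_pos
  by_contra! hgt
  obtain ⟨a, hrisk, ha⟩ := (((tendsto_risk_twoPoint (by positivity) hε.le).eventually
    (eventually_gt_nhds hgt)).and (((tendsto_pow_atTop two_ne_zero).const_mul_atTop hw).eventually
      (eventually_ge_atTop δ))).exists
  have hF := twoPoint_mem_sparseClass hw.le (min_le_right _ _) (min_le_left _ _) (a / √δ)
  have hs : (1 : ℝ) ∈ Ioc 0 (∫ x, x ^ 2 ∂twoPoint (min ε 1) (a / √δ)) := by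
    refine ⟨one_pos, ?_⟩
    rw [integral_twoPoint hw.le (min_le_right _ _), div_pow, sq_sqrt hδ.le, zero_pow two_ne_zero,
      mul_zero, zero_add, ← mul_div_assoc, one_le_div hδ]
    exact ha
  have := hSE _ hF 1 hs
  rw [mseMap_eq_mul_risk_map one_pos hδ hlam, map_twoPoint_mul, sqrt_one, div_one,
    div_mul_cancel₀ a hδ'.ne', one_div_mul_eq_div, div_lt_one hδ] at this
  linarith

lemma exists_mseMap_lt_iff {δ ε : ℝ} (hδ : δ ∈ Ioo 0 1) (hε : 0 < ε) :
    (∃ lam, 0 ≤ lam ∧ ∀ F ∈ sparseClass ε, ∀ s ∈ Ioc (0 : ℝ) (∫ x, x ^ 2 ∂F), mseMap s δ lam F < s)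
      ↔ ∃ θ, 0 ≤ θ ∧ worstRisk θ ε ≤ δ := by
  constructor
  · rintro ⟨lam, hlam, hSE⟩
    exact ⟨_, by positivity, worstRisk_le_of_mseMap_lt hδ.1 hε hlam hSE⟩
  · rintro ⟨θ, hθ, hR⟩
    have hθ0 : θ ≠ 0 := by
      rintro rfl
      linarith [worstRisk_zero_left ε, hδ.2]
    exact ⟨θ / √δ, by positivity,
      fun F hF s hs => mseMap_lt_self hδ.1 (hθ.lt_of_ne' hθ0) hε.le hR hF hs⟩

def seRegion (δ : ℝ) : Set ℝ := {ρ | 0 < ρ ∧ ∃ θ, 0 ≤ θ ∧ worstRisk θ (ρ * δ) ≤ δ}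

lemma rhoSE_eq_sSup_seRegion {δ : ℝ} (hδ : δ ∈ Ioo 0 1) : rhoSE δ = sSup (seRegion δ) := by
  unfold rhoSE seRegion
  congr 1
  ext ρ
  exact and_congr_right fun hρ => exists_mseMap_lt_iff hδ (mul_pos hρ hδ.1)

lemma bddAbove_seRegion {δ : ℝ} (hδ : δ ∈ Ioo 0 1) : BddAbove (seRegion δ) :=
  ⟨1 / δ, fun ρ ⟨_, _, _, hR⟩ => by
    rw [le_div_iff₀ hδ.1]
    exact (lt_one_of_worstRisk_lt_one (hR.trans_lt hδ.2)).le⟩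

lemma seRegion_nonempty {δ : ℝ} (hδ : 0 < δ) : (seRegion δ).Nonempty := by
  obtain ⟨θ, ε, hθ, hε, hR⟩ := exists_worstRisk_lt hδ
  exact ⟨ε / δ, div_pos hε hδ, θ, hθ, by rw [div_mul_cancel₀ ε hδ.ne']; exact hR.le⟩

lemma lt_sSup_seRegion_iff {δ ρ : ℝ} (hδ : δ ∈ Ioo 0 1) (hρ : 0 < ρ) :
    ρ < sSup (seRegion δ) ↔ Mstar (ρ * δ) < δ := by
  rw [Mstar_lt_iff (mul_pos hρ hδ.1).le]
  constructor
  · intro h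
    obtain ⟨ρ', ⟨-, θ, hθ, hR⟩, hρρ'⟩ := exists_lt_of_lt_csSup (seRegion_nonempty hδ.1) h
    exact ⟨θ, hθ, (worstRisk_lt_worstRisk hθ (mul_lt_mul_of_pos_right hρρ' hδ.1)
      (hR.trans_lt hδ.2)).trans_le hR⟩
  · rintro ⟨θ, hθ, hR⟩
    obtain ⟨ρ', hR', hρρ'⟩ := (((((continuous_worstRisk θ).comp (continuous_mul_const δ)
      ).continuousWithinAt (s := Ioi ρ)).eventually (eventually_lt_nhds hR)).and
        self_mem_nhdsWithin).exists
    exact hρρ'.trans_le (le_csSup (bddAbove_seRegion hδ) ⟨hρ.trans hρρ', θ, hθ, hR'.le⟩)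

theorem rhoSE_eq_minimax_characterization (δ : ℝ) (hδ : δ ∈ Set.Ioo (0:ℝ) 1) :
    (∀ ρ : ℝ, 0 < ρ → (ρ < rhoSE δ ↔ Mstar (δ * ρ) < δ))
      ∧ Mstar (rhoSE δ * δ) = δ := by
  have hlt : ∀ ρ, 0 < ρ → (ρ < rhoSE δ ↔ Mstar (ρ * δ) < δ) := fun ρ hρ => by
    rw [rhoSE_eq_sSup_seRegion hδ]
    exact lt_sSup_seRegion_iff hδ hρ
  have hpos : 0 < rhoSE δ := by
    obtain ⟨ρ, hρ⟩ := seRegion_nonempty hδ.1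
    rw [rhoSE_eq_sSup_seRegion hδ]
    exact hρ.1.trans_le (le_csSup (bddAbove_seRegion hδ) hρ)
  refine ⟨fun ρ hρ => mul_comm δ ρ ▸ hlt ρ hρ,
    le_antisymm ?_ (not_lt.mp fun h => lt_irrefl _ ((hlt _ hpos).mpr h))⟩
  have hcont : ContinuousWithinAt (fun ρ => Mstar (ρ * δ)) (Iio (rhoSE δ)) (rhoSE δ) :=
    ContinuousAt.comp_continuousWithinAt (g := Mstar)
      (continuousOn_Mstar.continuousAt (Ioi_mem_nhds (mul_pos hpos hδ.1)))
      (continuous_mul_const δ).continuousWithinAt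
  refine le_of_tendsto hcont ?_
  filter_upwards [Ioo_mem_nhdsLT hpos] with ρ hρ
  exact ((hlt ρ hρ.1).mp hρ.2).le
end
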